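/- Let ε, δ ∈ (0,1) with 1/√δ an integer, let p_{XY} be a joint distribution over finite sets 𝒳×𝒴, and let R₁, R₂ satisfy R₁ ≥ 3H(X|Y)/ε + log(1/δ), R₂ ≥ 3H(Y|X)/ε + log(1/δ), and R₁+R₂ ≥ 3H(X,Y)/ε + 4 log(1/δ) + log log(max(|𝒳|,|𝒴|)/δ). Then there exist deterministic encoders f_A : 𝒳 → C_A and f_B : 𝒴 → C_B with |C_A| ≤ 2^{⌈R₁+3 log(1/δ)⌉} and |C_B| ≤ 2^{⌈R₂+3 log(1/δ)⌉}, and a decoder g : C_A×C_B → 𝒳×𝒴, using no shared randomness, such that Pr_{(x,y)~p}[ g(f_A(x), f_B(y)) ≠ (x,y) ] ≤ ε+8δ. -/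

import Mathlib

/-!
Random binning. Alice and Bob hash `x` and `y` by independent uniformly random maps into
`2 ^ nA` and `2 ^ nB` bins, and Charlie outputs any pair of a typical set lying in the received
pair of bins. By Markov's inequality for the surprisals `-log p(x|y)`, `-log p(y|x)` and
`-log p(x,y)`, the pairs on which one of them exceeds `3/ε` times its mean (an entropy) carry
mass at most `ε`. Off that set, the rate conditions make each of `p(x|y)`, `p(y|x)`, `p(x,y)` at
least `1 / δ` times the matching collision probability `2^-nA`, `2^-nB`, `2^-(nA+nB)`, so the
expected number of other typical pairs sharing the bins of a typical `(x,y)` is at most `3δ`.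
Averaging over the hash maps yields deterministic encoders with error at most `ε + 3δ`.
-/

open Finset Real
open scoped Classical

noncomputable section

variable {𝒳 𝒴 : Type*} [Fintype 𝒳] [Fintype 𝒴]

/-- Marginal on `X` of a joint distribution on `𝒳 × 𝒴`. -/
def margX2 (p : 𝒳 → 𝒴 → ℝ) (x : 𝒳) : ℝ := ∑ y, p x y

/-- Marginal on `Y`. -/
def margY2 (p : 𝒳 → 𝒴 → ℝ) (y : 𝒴) : ℝ := ∑ x, p x y

/-- Conditional `p_{X|Y=y}(x)`. -/
def condXY2 (p : 𝒳 → 𝒴 → ℝ) (x : 𝒳) (y : 𝒴) : ℝ := p x y / margY2 p y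

/-- Conditional `p_{Y|X=x}(y)`. -/
def condYX2 (p : 𝒳 → 𝒴 → ℝ) (y : 𝒴) (x : 𝒳) : ℝ := p x y / margX2 p x

/-- Conditional entropy `H(X|Y)` (base-2 logarithms). -/
def condEntXY (p : 𝒳 → 𝒴 → ℝ) : ℝ := -∑ x, ∑ y, p x y * logb 2 (condXY2 p x y)

/-- Conditional entropy `H(Y|X)`. -/
def condEntYX (p : 𝒳 → 𝒴 → ℝ) : ℝ := -∑ x, ∑ y, p x y * logb 2 (condYX2 p y x)

/-- Joint entropy `H(X,Y)`. -/
def entXY (p : 𝒳 → 𝒴 → ℝ) : ℝ := -∑ x, ∑ y, p x y * logb 2 (p x y)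

open scoped BigOperators

section Surprisal
variable {ι : Type*} [Fintype ι] {q u : ι → ℝ}

theorem mul_neg_logb_nonneg {a b : ℝ} (ha : 0 ≤ a) (hb0 : 0 ≤ b) (hb1 : b ≤ 1) :
    0 ≤ a * -logb 2 b :=
  mul_nonneg ha (neg_nonneg.2 (logb_nonpos one_lt_two hb0 hb1))

theorem neg_sum_mul_logb_nonneg (hq : ∀ i, 0 ≤ q i) (hu0 : ∀ i, 0 ≤ u i) (hu1 : ∀ i, u i ≤ 1) :
    0 ≤ -∑ i, q i * logb 2 (u i) := by
  simp_rw [← sum_neg_distrib, ← mul_neg]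
  exact sum_nonneg fun i _ => mul_neg_logb_nonneg (hq i) (hu0 i) (hu1 i)

theorem sum_filter_mul_lt_one_le (hq : ∀ i, 0 ≤ q i) (hu0 : ∀ i, 0 ≤ u i)
    (hu1 : ∀ i, u i ≤ 1) (hqu : ∀ i, 0 < q i → 0 < u i) {c K : ℝ} (hc : 0 < c)
    (hK : (2 : ℝ) ^ ((-∑ i, q i * logb 2 (u i)) / c) ≤ K) :
    ∑ i with K * u i < 1, q i ≤ c := by
  set H := -∑ i, q i * logb 2 (u i) with hHdef
  set S := univ.filter fun i => K * u i < 1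
  have hH : 0 ≤ H := neg_sum_mul_logb_nonneg hq hu0 hu1
  -- Markov's inequality in strict form, so that `H = 0` needs no separate treatment.
  by_contra! hlt
  obtain ⟨j, hjS, hqj⟩ : ∃ j ∈ S, 0 < q j := by
    by_contra! h
    linarith [sum_nonpos h]
  have hsurp : ∀ i ∈ S, 0 < q i → H / c < -logb 2 (u i) := by
    intro i hiS hqi
    have hui := hqu i hqi
    rw [lt_neg, logb_lt_iff_lt_rpow one_lt_two hui, rpow_neg zero_le_two,
      lt_inv_comm₀ hui (by positivity), inv_eq_one_div]
    exact hK.trans_lt ((lt_div_iff₀ hui).2 (mem_filter.1 hiS).2)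
  have hstrict : ∑ i ∈ S, q i * (H / c) < ∑ i ∈ S, q i * -logb 2 (u i) := by
    refine sum_lt_sum (fun i hiS => ?_) ⟨j, hjS, mul_lt_mul_of_pos_left (hsurp j hjS hqj) hqj⟩
    rcases (hq i).eq_or_lt with hqi | hqi
    · simp [← hqi]
    · exact mul_le_mul_of_nonneg_left (hsurp i hiS hqi).le hqi.le
  have hsub : ∑ i ∈ S, q i * -logb 2 (u i) ≤ H := by
    simp_rw [hHdef, ← sum_neg_distrib, ← mul_neg]
    exact sum_le_sum_of_subset_of_nonneg (subset_univ S)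
      fun i _ _ => mul_neg_logb_nonneg (hq i) (hu0 i) (hu1 i)
  have hmass : H ≤ ∑ i ∈ S, q i * (H / c) := by
    rw [← sum_mul]
    calc H = c * (H / c) := by field_simp
      _ ≤ _ := mul_le_mul_of_nonneg_right hlt.le (by positivity)
  linarith

end Surprisal

section Conditional
variable {X Y : Type*} [Fintype X] {p : X → Y → ℝ}

theorem condXY2_nonneg (hp0 : ∀ x y, 0 ≤ p x y) (x : X) (y : Y) : 0 ≤ condXY2 p x y :=
  div_nonneg (hp0 x y) (sum_nonneg fun x' _ => hp0 x' y)

theorem condXY2_le_one (hp0 : ∀ x y, 0 ≤ p x y) (x : X) (y : Y) : condXY2 p x y ≤ 1 :=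
  div_le_one_of_le₀ (single_le_sum (fun x' _ => hp0 x' y) (mem_univ x))
    (sum_nonneg fun x' _ => hp0 x' y)

theorem condXY2_pos (hp0 : ∀ x y, 0 ≤ p x y) {x : X} {y : Y} (h : 0 < p x y) :
    0 < condXY2 p x y :=
  div_pos h (h.trans_le (single_le_sum (fun x' _ => hp0 x' y) (mem_univ x)))

theorem sum_condXY2_le_one (y : Y) : ∑ x, condXY2 p x y ≤ 1 := by
  simp only [condXY2, ← sum_div]
  exact div_self_le_one _

end Conditional

theorem condEntXY_nonneg {p : 𝒳 → 𝒴 → ℝ} (hp0 : ∀ x y, 0 ≤ p x y) : 0 ≤ condEntXY p := by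
  rw [condEntXY, ← Fintype.sum_prod_type']
  exact neg_sum_mul_logb_nonneg (fun z => hp0 z.1 z.2) (fun z => condXY2_nonneg hp0 z.1 z.2)
    fun z => condXY2_le_one hp0 z.1 z.2

-- `condYX2 p y x` is definitionally `condXY2 (flip p) y x`; the `condXY2` lemmas are applied to
-- `condYX2` that way.
theorem condEntYX_nonneg {p : 𝒳 → 𝒴 → ℝ} (hp0 : ∀ x y, 0 ≤ p x y) : 0 ≤ condEntYX p := by
  rw [condEntYX, ← Fintype.sum_prod_type']
  exact neg_sum_mul_logb_nonneg (fun z => hp0 z.1 z.2)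
    (fun z => condXY2_nonneg (p := flip p) (fun y x => hp0 x y) z.2 z.1)
    fun z => condXY2_le_one (p := flip p) (fun y x => hp0 x y) z.2 z.1

theorem expect_ite_apply_eq_apply {α β : Type*} [Fintype α] [Fintype β] [Nonempty β] (x x' : α) :
    𝔼 f : α → β, (if f x' = f x then (1 : ℝ) else 0) =
      if x' = x then 1 else (Fintype.card β : ℝ)⁻¹ := by
  split_ifs with h
  · simp [h]
  rw [Fintype.expect_equiv (Equiv.funSplitAt x' β) (fun f => if f x' = f x then (1 : ℝ) else 0)
    (fun g => if g.1 = g.2 ⟨x, Ne.symm h⟩ then 1 else 0) fun f => rfl,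
    ← univ_product_univ, expect_product, expect_comm]
  simp

section Binning
variable {X Y α β : Type*} [Nonempty (X × Y)]

def binDecoder (T : Finset (X × Y)) (fA : X → α) (fB : Y → β) (a : α) (b : β) : X × Y :=
  if h : ∃ z ∈ T, fA z.1 = a ∧ fB z.2 = b then h.choose else Classical.arbitrary _

theorem exists_collision_of_binDecoder_ne {T : Finset (X × Y)} {fA : X → α} {fB : Y → β}
    {z : X × Y} (hz : z ∈ T) (h : binDecoder T fA fB (fA z.1) (fB z.2) ≠ z) :
    ∃ z' ∈ T.erase z, fA z'.1 = fA z.1 ∧ fB z'.2 = fB z.2 := by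
  have hex : ∃ z' ∈ T, fA z'.1 = fA z.1 ∧ fB z'.2 = fB z.2 := ⟨z, hz, rfl, rfl⟩
  rw [binDecoder, dif_pos hex] at h
  obtain ⟨hT, hA, hB⟩ := hex.choose_spec
  exact ⟨hex.choose, mem_erase.2 ⟨h, hT⟩, hA, hB⟩

theorem ite_binDecoder_ne_le {T : Finset (X × Y)} (fA : X → α) (fB : Y → β) {z : X × Y}
    (hz : z ∈ T) :
    (if binDecoder T fA fB (fA z.1) (fB z.2) ≠ z then (1 : ℝ) else 0) ≤
      ∑ z' ∈ T.erase z, (if fA z'.1 = fA z.1 then 1 else 0) *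
        (if fB z'.2 = fB z.2 then 1 else 0) := by
  split_ifs with h
  · obtain ⟨z', hz', hA, hB⟩ := exists_collision_of_binDecoder_ne hz h
    refine le_trans ?_ (single_le_sum (fun _ _ => by positivity) hz')
    simp [hA, hB]
  · exact sum_nonneg fun _ _ => by positivity

theorem expect_binDecoder_ne_le [Fintype X] [Fintype Y] [Fintype α] [Fintype β] [Nonempty α]
    [Nonempty β] {T : Finset (X × Y)} {z : X × Y} (hz : z ∈ T) :
    𝔼 fA : X → α, 𝔼 fB : Y → β,
        (if binDecoder T fA fB (fA z.1) (fB z.2) ≠ z then (1 : ℝ) else 0) ≤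
      ∑ z' ∈ T.erase z, (if z'.1 = z.1 then 1 else (Fintype.card α : ℝ)⁻¹) *
        (if z'.2 = z.2 then 1 else (Fintype.card β : ℝ)⁻¹) := by
  calc _ ≤ 𝔼 fA : X → α, 𝔼 fB : Y → β, ∑ z' ∈ T.erase z,
        (if fA z'.1 = fA z.1 then (1 : ℝ) else 0) * (if fB z'.2 = fB z.2 then 1 else 0) :=
        expect_le_expect fun fA _ => expect_le_expect fun fB _ => ite_binDecoder_ne_le fA fB hz
    _ = _ := by simp_rw [expect_sum_comm, ← Fintype.expect_mul_expect, expect_ite_apply_eq_apply]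

end Binning

section Collision
variable {X Y : Type*} {δ a b : ℝ} {u v w : X → Y → ℝ}

theorem collision_le (ha : 0 < a) (hb : 0 < b) {z z' : X × Y} (hne : z' ≠ z)
    (hu : 1 ≤ δ * a * u z'.1 z'.2) (hv : 1 ≤ δ * b * v z'.1 z'.2)
    (hw : 1 ≤ δ * (a * b) * w z'.1 z'.2) :
    (if z'.1 = z.1 then 1 else a⁻¹) * (if z'.2 = z.2 then 1 else b⁻¹) ≤
      δ * ((if z'.2 = z.2 then u z'.1 z'.2 else 0) + (if z'.1 = z.1 then v z'.1 z'.2 else 0) +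
        w z'.1 z'.2) := by
  have hab := mul_pos ha hb
  have hδu : 0 < δ * u z'.1 z'.2 := pos_of_mul_pos_right (by linarith) ha.le
  have hδv : 0 < δ * v z'.1 z'.2 := pos_of_mul_pos_right (by linarith) hb.le
  have hδw : 0 < δ * w z'.1 z'.2 := pos_of_mul_pos_right (by linarith) hab.le
  split_ifs with h1 h2 h2
  · exact absurd (Prod.ext h1 h2) hne
  · rw [one_mul, inv_le_iff_one_le_mul₀ hb]; nlinarith
  · rw [mul_one, inv_le_iff_one_le_mul₀ ha]; nlinarith
  · rw [← mul_inv, inv_le_iff_one_le_mul₀ hab]; nlinarith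

theorem sum_collision_le_three_mul [Fintype X] [Fintype Y] (hδ : 0 ≤ δ) (ha : 0 < a) (hb : 0 < b)
    (hu : ∀ x y, 0 ≤ u x y) (hv : ∀ x y, 0 ≤ v x y) (hw : ∀ x y, 0 ≤ w x y)
    (hu1 : ∀ y, ∑ x, u x y ≤ 1) (hv1 : ∀ x, ∑ y, v x y ≤ 1) (hw1 : ∑ x, ∑ y, w x y ≤ 1)
    {T : Finset (X × Y)} (hT : ∀ z' ∈ T, 1 ≤ δ * a * u z'.1 z'.2 ∧ 1 ≤ δ * b * v z'.1 z'.2 ∧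
      1 ≤ δ * (a * b) * w z'.1 z'.2) (z : X × Y) :
    ∑ z' ∈ T.erase z, (if z'.1 = z.1 then 1 else a⁻¹) * (if z'.2 = z.2 then 1 else b⁻¹) ≤
      3 * δ := by
  calc _ ≤ ∑ z' ∈ T.erase z, δ * ((if z'.2 = z.2 then u z'.1 z'.2 else 0) +
        (if z'.1 = z.1 then v z'.1 z'.2 else 0) + w z'.1 z'.2) :=
        sum_le_sum fun z' hz' => by
          obtain ⟨hne, hz'T⟩ := mem_erase.1 hz'
          obtain ⟨hzu, hzv, hzw⟩ := hT z' hz'T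
          exact collision_le ha hb hne hzu hzv hzw
    _ ≤ ∑ z' : X × Y, δ * ((if z'.2 = z.2 then u z'.1 z'.2 else 0) +
        (if z'.1 = z.1 then v z'.1 z'.2 else 0) + w z'.1 z'.2) :=
        sum_le_sum_of_subset_of_nonneg (subset_univ _) fun z' _ _ => by
          have := hu z'.1 z'.2; have := hv z'.1 z'.2; have := hw z'.1 z'.2
          positivity
    _ = δ * (∑ x, u x z.2 + ∑ y, v z.1 y + ∑ x, ∑ y, w x y) := by
        rw [← mul_sum, Fintype.sum_prod_type]
        simp [sum_add_distrib]
    _ ≤ 3 * δ := by nlinarith [hu1 z.2, hv1 z.1]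

end Collision

theorem exists_error_le_of_forall_expect_le {X Y α β : Type*} [Fintype X] [Fintype Y]
    [Fintype α] [Fintype β] [Nonempty α] [Nonempty β] (p : X → Y → ℝ) (hp0 : ∀ x y, 0 ≤ p x y)
    (hp1 : ∑ x, ∑ y, p x y = 1) (g : (X → α) → (Y → β) → α → β → X × Y)
    (T : Finset (X × Y)) {η : ℝ} (hη : 0 ≤ η)
    (hT : ∀ z ∈ T, 𝔼 fA : X → α, 𝔼 fB : Y → β,
      (if g fA fB (fA z.1) (fB z.2) ≠ z then (1 : ℝ) else 0) ≤ η) :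
    ∃ (fA : X → α) (fB : Y → β),
      ∑ x, ∑ y, (if g fA fB (fA x) (fB y) ≠ (x, y) then p x y else 0) ≤
        η + ∑ z ∈ Tᶜ, p z.1 z.2 := by
  have hpoint : ∀ z : X × Y, p z.1 z.2 * 𝔼 fA : X → α, 𝔼 fB : Y → β,
      (if g fA fB (fA z.1) (fB z.2) ≠ z then (1 : ℝ) else 0) ≤
        if z ∈ T then p z.1 z.2 * η else p z.1 z.2 := by
    intro z
    split_ifs with hz
    · exact mul_le_mul_of_nonneg_left (hT z hz) (hp0 _ _)
    · refine mul_le_of_le_one_right (hp0 _ _) (expect_le univ_nonempty fun fA _ => ?_)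
      exact expect_le univ_nonempty fun fB _ => by split_ifs <;> norm_num
  have hmean : 𝔼 fA : X → α, 𝔼 fB : Y → β,
      ∑ x, ∑ y, (if g fA fB (fA x) (fB y) ≠ (x, y) then p x y else 0) ≤
        η + ∑ z ∈ Tᶜ, p z.1 z.2 := by
    calc _ = ∑ z : X × Y, p z.1 z.2 * 𝔼 fA : X → α, 𝔼 fB : Y → β,
          (if g fA fB (fA z.1) (fB z.2) ≠ z then (1 : ℝ) else 0) := by
          simp_rw [← Fintype.sum_prod_type', mul_expect, expect_sum_comm, mul_ite, mul_one, mul_zero]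
      _ ≤ ∑ z : X × Y, if z ∈ T then p z.1 z.2 * η else p z.1 z.2 := sum_le_sum fun z _ => hpoint z
      _ = η * ∑ z ∈ T, p z.1 z.2 + ∑ z ∈ Tᶜ, p z.1 z.2 := by
          rw [← sum_add_sum_compl T, mul_sum, sum_congr rfl fun z hz => if_pos hz,
            sum_congr rfl fun z hz => if_neg (mem_compl.1 hz)]
          simp_rw [mul_comm η]
      _ ≤ η + ∑ z ∈ Tᶜ, p z.1 z.2 := by
          refine add_le_add_left (mul_le_of_le_one_right hη ?_) _
          calc ∑ z ∈ T, p z.1 z.2 ≤ ∑ z : X × Y, p z.1 z.2 :=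
                sum_le_sum_of_subset_of_nonneg (subset_univ T) fun z _ _ => hp0 _ _
            _ = 1 := by rw [Fintype.sum_prod_type, hp1]
  obtain ⟨fA, -, hfA⟩ := exists_le_of_expect_le univ_nonempty hmean
  obtain ⟨fB, -, hfB⟩ := exists_le_of_expect_le univ_nonempty hfA
  exact ⟨fA, fB, hfB⟩

-- With `a`, `b` the numbers of bins, membership says that the collision probabilities `1/a`,
-- `1/b`, `1/(ab)` are at most `δ` times `p(x|y)`, `p(y|x)`, `p(x,y)` respectively.
def typicalSet (δ a b : ℝ) (p : 𝒳 → 𝒴 → ℝ) : Finset (𝒳 × 𝒴) :=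
  {z | 1 ≤ δ * a * condXY2 p z.1 z.2 ∧ 1 ≤ δ * b * condYX2 p z.2 z.1 ∧
    1 ≤ δ * (a * b) * p z.1 z.2}

theorem expect_binDecoder_typicalSet_ne_le {α β : Type*} [Fintype α] [Fintype β] [Nonempty α]
    [Nonempty β] [Nonempty (𝒳 × 𝒴)] {p : 𝒳 → 𝒴 → ℝ} (hp0 : ∀ x y, 0 ≤ p x y)
    (hp1 : ∑ x, ∑ y, p x y = 1) {δ : ℝ} (hδ : 0 ≤ δ) {z : 𝒳 × 𝒴}
    (hz : z ∈ typicalSet δ (Fintype.card α) (Fintype.card β) p) :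
    𝔼 fA : 𝒳 → α, 𝔼 fB : 𝒴 → β, (if binDecoder (typicalSet δ (Fintype.card α)
      (Fintype.card β) p) fA fB (fA z.1) (fB z.2) ≠ z then (1 : ℝ) else 0) ≤ 3 * δ :=
  (expect_binDecoder_ne_le hz).trans <| sum_collision_le_three_mul (u := condXY2 p)
    (v := fun x y => condYX2 p y x) hδ (by positivity) (by positivity) (condXY2_nonneg hp0)
    (fun x y => condXY2_nonneg (p := flip p) (fun y x => hp0 x y) y x) hp0 sum_condXY2_le_one
    (fun x => sum_condXY2_le_one (p := flip p) x) hp1.le (fun _ hz' => (mem_filter.1 hz').2) z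

theorem sum_compl_typicalSet_le_add {δ a b : ℝ} {p : 𝒳 → 𝒴 → ℝ} (hp0 : ∀ x y, 0 ≤ p x y) :
    ∑ z ∈ (typicalSet δ a b p)ᶜ, p z.1 z.2 ≤
      ∑ z : 𝒳 × 𝒴 with δ * a * condXY2 p z.1 z.2 < 1, p z.1 z.2 +
        ∑ z : 𝒳 × 𝒴 with δ * b * condYX2 p z.2 z.1 < 1, p z.1 z.2 +
          ∑ z : 𝒳 × 𝒴 with δ * (a * b) * p z.1 z.2 < 1, p z.1 z.2 := by
  rw [typicalSet, compl_filter, sum_filter, sum_filter, sum_filter, sum_filter,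
    ← sum_add_distrib, ← sum_add_distrib]
  refine sum_le_sum fun z _ => ?_
  have := hp0 z.1 z.2
  split_ifs <;> first | linarith | simp_all

theorem sum_compl_typicalSet_le {p : 𝒳 → 𝒴 → ℝ} (hp0 : ∀ x y, 0 ≤ p x y)
    (hp1 : ∑ x, ∑ y, p x y = 1) {ε δ a b : ℝ} (hε : 0 < ε)
    (hA : (2 : ℝ) ^ (3 * condEntXY p / ε) ≤ δ * a)
    (hB : (2 : ℝ) ^ (3 * condEntYX p / ε) ≤ δ * b)
    (hJ : (2 : ℝ) ^ (3 * entXY p / ε) ≤ δ * (a * b)) :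
    ∑ z ∈ (typicalSet δ a b p)ᶜ, p z.1 z.2 ≤ ε := by
  have hc : 0 < ε / 3 := by positivity
  have hthr : ∀ H : ℝ, 3 * H / ε = H / (ε / 3) := fun H => by ring
  have hp0' : ∀ y x, 0 ≤ flip p y x := fun y x => hp0 x y
  have hp1' : ∀ z : 𝒳 × 𝒴, p z.1 z.2 ≤ 1 := fun z => by
    rw [← hp1, ← Fintype.sum_prod_type']
    exact single_le_sum (fun z _ => hp0 z.1 z.2) (mem_univ z)
  rw [condEntXY, ← Fintype.sum_prod_type', hthr] at hA
  rw [condEntYX, ← Fintype.sum_prod_type', hthr] at hB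
  rw [entXY, ← Fintype.sum_prod_type', hthr] at hJ
  have hA' := sum_filter_mul_lt_one_le (q := fun z : 𝒳 × 𝒴 => p z.1 z.2)
    (u := fun z => condXY2 p z.1 z.2) (fun z => hp0 z.1 z.2) (fun z => condXY2_nonneg hp0 z.1 z.2)
    (fun z => condXY2_le_one hp0 z.1 z.2) (fun z => condXY2_pos hp0) hc hA
  have hB' := sum_filter_mul_lt_one_le (q := fun z : 𝒳 × 𝒴 => p z.1 z.2)
    (u := fun z => condYX2 p z.2 z.1) (fun z => hp0 z.1 z.2)
    (fun z => condXY2_nonneg hp0' z.2 z.1) (fun z => condXY2_le_one hp0' z.2 z.1)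
    (fun z => condXY2_pos hp0') hc hB
  have hJ' := sum_filter_mul_lt_one_le (q := fun z : 𝒳 × 𝒴 => p z.1 z.2)
    (u := fun z => p z.1 z.2) (fun z => hp0 z.1 z.2) (fun z => hp0 z.1 z.2) hp1' (fun z => id) hc hJ
  linarith [sum_compl_typicalSet_le_add (δ := δ) (a := a) (b := b) hp0]

theorem nonempty_prod_of_sum_sum_ne_zero {X Y : Type*} [Fintype X] [Fintype Y]
    {p : X → Y → ℝ} (h : ∑ x, ∑ y, p x y ≠ 0) : Nonempty (X × Y) := by
  obtain ⟨x, -, hx⟩ := exists_ne_zero_of_sum_ne_zero h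
  obtain ⟨y, -, -⟩ := exists_ne_zero_of_sum_ne_zero hx
  exact ⟨(x, y)⟩

theorem le_one_quarter_of_exists_natCast_eq_one_div_sqrt {δ : ℝ} (hδ0 : 0 < δ) (hδ1 : δ < 1)
    (h : ∃ j : ℕ, (j : ℝ) = 1 / √δ) : δ ≤ 1 / 4 := by
  obtain ⟨j, hj⟩ := h
  have hs0 : 0 < √δ := sqrt_pos.2 hδ0
  have hs1 : √δ < 1 := (sqrt_lt' one_pos).2 (by linarith)
  have hj2 : (2 : ℝ) ≤ j := by
    have : 1 < j := by
      rw [← Nat.one_lt_cast (α := ℝ), hj, lt_div_iff₀ hs0]; linarith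
    exact_mod_cast this
  rw [hj, le_div_iff₀ hs0] at hj2
  nlinarith [sq_sqrt hδ0.le]

theorem logb_logb_div_nonneg {M δ : ℝ} (hM : 1 ≤ M) (hδ0 : 0 < δ) (hδ : δ ≤ 1 / 2) :
    0 ≤ logb 2 (logb 2 (M / δ)) := by
  refine logb_nonneg one_lt_two ((le_logb_iff_rpow_le one_lt_two (by positivity)).2 ?_)
  rw [rpow_one, le_div_iff₀ hδ0]
  linarith

theorem two_rpow_le_mul_two_pow {t δ : ℝ} (hδ : 0 < δ) {n : ℕ} (h : t + logb 2 (1 / δ) ≤ n) :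
    (2 : ℝ) ^ t ≤ δ * 2 ^ n := by
  calc (2 : ℝ) ^ t = δ * 2 ^ (t + logb 2 (1 / δ)) := by
        rw [rpow_add two_pos, rpow_logb two_pos (by norm_num) (by positivity)]
        field_simp
    _ ≤ δ * 2 ^ n := by
        rw [← rpow_natCast]
        gcongr
        norm_num

theorem natCast_two_pow_natCeil {r : ℝ} (hr : 0 ≤ r) :
    ((2 ^ ⌈r⌉₊ : ℕ) : ℝ) = (2 : ℝ) ^ ⌈r⌉ := by
  rw [← Int.natCast_ceil_eq_ceil hr, zpow_natCast]
  push_cast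
  rfl

/-- Corollary 5.5, one-shot distributed source coding in terms of
conditional entropies: if `R₁ ≥ 3H(X|Y)/ε + log(1/δ)`, `R₂ ≥ 3H(Y|X)/ε + log(1/δ)`
and `R₁+R₂ ≥ 3H(X,Y)/ε + 4 log(1/δ) + log log(max(|𝒳|,|𝒴|)/δ)`, then there is a
deterministic Slepian–Wolf protocol, with no shared randomness, with message sets of
sizes `2^⌈R₁+3 log(1/δ)⌉` and `2^⌈R₂+3 log(1/δ)⌉`, and decoding error at most
`ε + 8δ`. -/
theorem one_shot_distributed_source_coding_entropy
    (p : 𝒳 → 𝒴 → ℝ) (hp0 : ∀ x y, 0 ≤ p x y) (hp1 : (∑ x, ∑ y, p x y) = 1)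
    (ε δ : ℝ) (hε : ε ∈ Set.Ioo (0:ℝ) 1) (hδ : δ ∈ Set.Ioo (0:ℝ) 1)
    (hδint : ∃ j : ℕ, (j : ℝ) = 1 / Real.sqrt δ)
    (R₁ R₂ : ℝ)
    (hR₁ : 3 * condEntXY p / ε + logb 2 (1 / δ) ≤ R₁)
    (hR₂ : 3 * condEntYX p / ε + logb 2 (1 / δ) ≤ R₂)
    (hR₁₂ : 3 * entXY p / ε + 4 * logb 2 (1 / δ) +
      logb 2 (logb 2 ((max (Fintype.card 𝒳) (Fintype.card 𝒴) : ℝ) / δ)) ≤ R₁ + R₂) :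
    ∃ (cA cB : ℕ) (fA : 𝒳 → Fin cA) (fB : 𝒴 → Fin cB) (g : Fin cA → Fin cB → 𝒳 × 𝒴),
      ((cA : ℝ) ≤ (2 : ℝ) ^ (⌈R₁ + 3 * logb 2 (1 / δ)⌉ : ℤ)) ∧
      ((cB : ℝ) ≤ (2 : ℝ) ^ (⌈R₂ + 3 * logb 2 (1 / δ)⌉ : ℤ)) ∧
      (∑ x, ∑ y, (if g (fA x) (fB y) ≠ (x, y) then p x y else 0)) ≤ ε + 8 * δ := by
  obtain ⟨hε0, -⟩ := hε
  obtain ⟨hδ0, hδ1⟩ := hδ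
  have hδ4 := le_one_quarter_of_exists_natCast_eq_one_div_sqrt hδ0 hδ1 hδint
  have hXY := nonempty_prod_of_sum_sum_ne_zero (hp1.trans_ne one_ne_zero)
  have : Nonempty 𝒳 := (nonempty_prod.1 hXY).1
  set L := logb 2 (1 / δ)
  have hL : 0 ≤ L := logb_nonneg one_lt_two (one_le_one_div hδ0 hδ1.le)
  have hLL := logb_logb_div_nonneg (le_max_of_le_left (Nat.one_le_cast.2 Fintype.card_pos) :
    (1 : ℝ) ≤ max (Fintype.card 𝒳 : ℝ) (Fintype.card 𝒴)) hδ0 (by linarith)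
  have hA0 : 0 ≤ 3 * condEntXY p / ε := by have := condEntXY_nonneg hp0; positivity
  have hB0 : 0 ≤ 3 * condEntYX p / ε := by have := condEntYX_nonneg hp0; positivity
  set nA := ⌈R₁ + 3 * L⌉₊
  set nB := ⌈R₂ + 3 * L⌉₊
  have hnA : R₁ + 3 * L ≤ nA := Nat.le_ceil _
  have hnB : R₂ + 3 * L ≤ nB := Nat.le_ceil _
  set T := typicalSet δ (Fintype.card (Fin (2 ^ nA))) (Fintype.card (Fin (2 ^ nB))) p
  obtain ⟨fA, fB, herr⟩ := exists_error_le_of_forall_expect_le p hp0 hp1 (binDecoder T) T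
    (by positivity : 0 ≤ 3 * δ) fun z hz => expect_binDecoder_typicalSet_ne_le hp0 hp1 hδ0.le hz
  have hatyp : ∑ z ∈ Tᶜ, p z.1 z.2 ≤ ε := by
    simp only [T, Fintype.card_fin, Nat.cast_pow, Nat.cast_ofNat]
    refine sum_compl_typicalSet_le hp0 hp1 hε0
      (two_rpow_le_mul_two_pow hδ0 (by linarith)) (two_rpow_le_mul_two_pow hδ0 (by linarith)) ?_
    rw [← pow_add]
    exact two_rpow_le_mul_two_pow hδ0 (by push_cast; linarith)
  refine ⟨2 ^ nA, 2 ^ nB, fA, fB, binDecoder T fA fB,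
    (natCast_two_pow_natCeil (by linarith)).le, (natCast_two_pow_natCeil (by linarith)).le, ?_⟩
  linarith

end
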